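/- arXiv:1310.5192 — 3 statements merged into one kernel-verified Lean document; each statement's English description precedes it below -/
import Mathlib

section
/- Let a₁ > a₂ > 0 and let η₀ ⊆ ℤ^d be a union of hypercubes. Let (η_k)_{k ≥ 0} be any sequence of configurations such that, for each k, η_{k+1} is obtained from η_k by a single best-response update at some site x_k ∈ ℤ^d (η_{k+1} agrees with η_k off x_k and x_k ∈ η_{k+1} iff x_k ∈ Φ(η_k)). Then for every k one has η_k ⊆ Φ(η_k) and η_k ⊆ η_{k+1}; in particular the sequence of configurations is nondecreasing. (This is the deterministic core of the fact that the sparse best-response dynamics started from a union of hypercubes can only grow.) -/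
/-!
A site `x` of a hypercube `H_z ⊆ η` has its `d` neighbors inside `H_z` in `η`, hence at most `d`
outside; since `a₁ > a₂ ≥ 0` it strictly prefers strategy 1, so a union of hypercubes satisfies
`η ⊆ Φ(η)`. This invariant survives a single best-response update: the update can only add the
updated site, and enlarging `η` raises `N₁` and lowers `N₂`, which keeps every site of `η` in `Φ`.
-/

/-- Two sites of `ℤᵈ` are neighbors iff their `ℓ¹`-distance equals `1`. -/
def Neighbor (d : ℕ) (x y : Fin d → ℤ) : Prop :=
  (∑ i, (x i - y i).natAbs) = 1

/-- Number of neighbors of `x` following strategy 1 (i.e. belonging to `η`). -/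
noncomputable def N1 (d : ℕ) (η : Set (Fin d → ℤ)) (x : Fin d → ℤ) : ℕ :=
  Set.ncard {y | Neighbor d x y ∧ y ∈ η}

/-- Number of neighbors of `x` following strategy 2 (i.e. not belonging to `η`). -/
noncomputable def N2 (d : ℕ) (η : Set (Fin d → ℤ)) (x : Fin d → ℤ) : ℕ :=
  Set.ncard {y | Neighbor d x y ∧ y ∉ η}

/-- The best-response map on configurations. -/
def Phi (d : ℕ) (a₁ a₂ : ℝ) (η : Set (Fin d → ℤ)) : Set (Fin d → ℤ) :=
  {x | a₁ * (N1 d η x : ℝ) > a₂ * (N2 d η x : ℝ) ∨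
    (x ∈ η ∧ a₁ * (N1 d η x : ℝ) = a₂ * (N2 d η x : ℝ))}

/-- The hypercube `H_z = 2z + {0,1}^d`. -/
def Hcube (d : ℕ) (z : Fin d → ℤ) : Set (Fin d → ℤ) :=
  {x | ∀ i, x i = 2 * z i ∨ x i = 2 * z i + 1}

/-- A configuration is a union of hypercubes if it is `⋃_{z ∈ S} H_z` for some `S ⊆ ℤᵈ`. -/
def IsUnionOfHypercubes (d : ℕ) (η : Set (Fin d → ℤ)) : Prop :=
  ∃ S : Set (Fin d → ℤ), η = ⋃ z ∈ S, Hcube d z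

def IsBestResponseUpdate (d : ℕ) (a₁ a₂ : ℝ) (η η' : Set (Fin d → ℤ)) (x : Fin d → ℤ) :
    Prop :=
  (∀ y, y ≠ x → (y ∈ η' ↔ y ∈ η)) ∧ (x ∈ η' ↔ x ∈ Phi d a₁ a₂ η)

section Neighbors

variable {d : ℕ}

lemma neighbor_update {x : Fin d → ℤ} {i : Fin d} {c : ℤ} (h : (x i - c).natAbs = 1) :
    Neighbor d x (Function.update x i c) := by
  unfold Neighbor
  rw [Finset.sum_eq_single i (fun j _ hj => by simp [Function.update_of_ne hj]) (by simp)]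
  simpa using h

lemma eq_update_of_neighbor {x y : Fin d → ℤ} (h : Neighbor d x y) :
    ∃ i, y = Function.update x i (x i + 1) ∨ y = Function.update x i (x i - 1) := by
  obtain ⟨i, -, hi⟩ : ∃ i ∈ Finset.univ, (x i - y i).natAbs ≠ 0 := by
    by_contra! h0
    simp [Neighbor, Finset.sum_eq_zero h0] at h
  have hsum : (x i - y i).natAbs + ∑ j ∈ Finset.univ.erase i, (x j - y j).natAbs = 1 :=
    (Finset.add_sum_erase Finset.univ (fun j => (x j - y j).natAbs) (Finset.mem_univ i)).trans h
  have hrest0 : ∑ j ∈ Finset.univ.erase i, (x j - y j).natAbs = 0 := by omega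
  have hrest : ∀ j ≠ i, y j = x j := fun j hj => by
    have := Finset.sum_eq_zero_iff.mp hrest0 j (Finset.mem_erase.mpr ⟨hj, Finset.mem_univ j⟩)
    omega
  refine ⟨i, ?_⟩
  rcases (by omega : y i = x i + 1 ∨ y i = x i - 1) with hy | hy
  · left; ext j; rcases eq_or_ne j i with rfl | hj <;> simp [*]
  · right; ext j; rcases eq_or_ne j i with rfl | hj <;> simp [*]

lemma neighbors_finite_and_ncard_le (x : Fin d → ℤ) :
    {y | Neighbor d x y}.Finite ∧ {y | Neighbor d x y}.ncard ≤ 2 * d := by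
  classical
  let s : Finset (Fin d → ℤ) := Finset.univ.biUnion fun i =>
    {Function.update x i (x i + 1), Function.update x i (x i - 1)}
  have hsub : {y | Neighbor d x y} ⊆ s := fun y hy => by
    obtain ⟨i, hi⟩ := eq_update_of_neighbor hy
    simpa [s] using ⟨i, hi⟩
  refine ⟨s.finite_toSet.subset hsub, ?_⟩
  calc {y | Neighbor d x y}.ncard ≤ s.card := by
        simpa using Set.ncard_le_ncard hsub s.finite_toSet
    _ ≤ ∑ _i : Fin d, 2 := Finset.card_biUnion_le.trans (Finset.sum_le_sum fun _ _ =>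
        Finset.card_le_two)
    _ = 2 * d := by simp [mul_comm]

lemma N1_add_N2_le (η : Set (Fin d → ℤ)) (x : Fin d → ℤ) : N1 d η x + N2 d η x ≤ 2 * d :=
  (Set.ncard_inter_add_ncard_sdiff_eq_ncard {y | Neighbor d x y} η
    (neighbors_finite_and_ncard_le x).1).trans_le (neighbors_finite_and_ncard_le x).2

lemma N1_mono {η η' : Set (Fin d → ℤ)} (h : η ⊆ η') (x : Fin d → ℤ) :
    N1 d η x ≤ N1 d η' x :=
  Set.ncard_le_ncard (fun _ hy => ⟨hy.1, h hy.2⟩)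
    ((neighbors_finite_and_ncard_le x).1.subset fun _ hy => hy.1)

lemma N2_anti {η η' : Set (Fin d → ℤ)} (h : η ⊆ η') (x : Fin d → ℤ) :
    N2 d η' x ≤ N2 d η x :=
  Set.ncard_le_ncard (fun _ hy => ⟨hy.1, fun hm => hy.2 (h hm)⟩)
    ((neighbors_finite_and_ncard_le x).1.subset fun _ hy => hy.1)

lemma le_N1_of_mem_Hcube {z x : Fin d → ℤ} (hx : x ∈ Hcube d z) {η : Set (Fin d → ℤ)}
    (hH : Hcube d z ⊆ η) : d ≤ N1 d η x := by
  -- `c ↦ 4 z i + 1 - c` swaps the two values `2 z i` and `2 z i + 1` of the `i`-th coordinate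
  let flip : Fin d → Fin d → ℤ := fun i => Function.update x i (4 * z i + 1 - x i)
  have hflip_mem : ∀ i ∈ Set.univ, flip i ∈ {y | Neighbor d x y ∧ y ∈ η} := fun i _ => by
    refine ⟨neighbor_update (by rcases hx i with h | h <;> omega), hH fun j => ?_⟩
    rcases eq_or_ne j i with rfl | hj
    · simp only [flip, Function.update_self]; rcases hx j with h | h <;> omega
    · simpa [flip, Function.update_of_ne hj] using hx j
  have hflip_inj : Set.InjOn flip Set.univ := fun i _ i' _ hii' => by
    by_contra hne
    have := congrFun hii' i
    simp only [flip, Function.update_self, Function.update_of_ne hne] at this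
    rcases hx i with h | h <;> omega
  simpa [N1] using Set.ncard_le_ncard_of_injOn flip hflip_mem hflip_inj
    ((neighbors_finite_and_ncard_le x).1.subset fun _ hy => hy.1)

end Neighbors

section BestResponse

variable {d : ℕ} {a₁ a₂ : ℝ}

lemma le_of_mem_Phi {η : Set (Fin d → ℤ)} {x : Fin d → ℤ} (hx : x ∈ Phi d a₁ a₂ η) :
    a₂ * (N2 d η x : ℝ) ≤ a₁ * (N1 d η x : ℝ) := by
  rcases hx with h | ⟨_, h⟩
  · exact h.le
  · exact h.ge

lemma mem_Phi_of_le {η : Set (Fin d → ℤ)} {x : Fin d → ℤ} (hx : x ∈ η)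
    (h : a₂ * (N2 d η x : ℝ) ≤ a₁ * (N1 d η x : ℝ)) : x ∈ Phi d a₁ a₂ η :=
  h.lt_or_eq.imp id fun h => ⟨hx, h.symm⟩

lemma mem_Phi_of_subset (ha₁ : 0 ≤ a₁) (ha₂ : 0 ≤ a₂) {η η' : Set (Fin d → ℤ)}
    (hsub : η ⊆ η') {x : Fin d → ℤ} (hx : x ∈ Phi d a₁ a₂ η) (hx' : x ∈ η') :
    x ∈ Phi d a₁ a₂ η' := by
  refine mem_Phi_of_le hx' ?_
  calc a₂ * (N2 d η' x : ℝ) ≤ a₂ * N2 d η x := by gcongr; exact N2_anti hsub x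
    _ ≤ a₁ * N1 d η x := le_of_mem_Phi hx
    _ ≤ a₁ * N1 d η' x := by gcongr; exact N1_mono hsub x

lemma IsUnionOfHypercubes.subset_Phi (hd : 0 < d) (ha : a₂ < a₁) (ha₂ : 0 ≤ a₂)
    {η : Set (Fin d → ℤ)} (h : IsUnionOfHypercubes d η) : η ⊆ Phi d a₁ a₂ η := by
  obtain ⟨S, rfl⟩ := h
  intro x hx
  obtain ⟨z, hz, hxz⟩ := Set.mem_iUnion₂.mp hx
  have hN1 := le_N1_of_mem_Hcube hxz (Set.subset_biUnion_of_mem hz)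
  have hN2 : N2 d (⋃ z ∈ S, Hcube d z) x ≤ d := by
    have := N1_add_N2_le (⋃ z ∈ S, Hcube d z) x; omega
  left
  calc a₂ * (N2 d (⋃ z ∈ S, Hcube d z) x : ℝ) ≤ a₂ * d := by gcongr
    _ < a₁ * d := by gcongr
    _ ≤ a₁ * N1 d (⋃ z ∈ S, Hcube d z) x := by gcongr; linarith

namespace IsBestResponseUpdate

variable {η η' : Set (Fin d → ℤ)} {x : Fin d → ℤ}

lemma subset (hu : IsBestResponseUpdate d a₁ a₂ η η' x) (hη : η ⊆ Phi d a₁ a₂ η) :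
    η ⊆ η' := fun y hy => by
  rcases eq_or_ne y x with rfl | hyx
  · exact hu.2.mpr (hη hy)
  · exact (hu.1 y hyx).mpr hy

lemma subset_Phi (hu : IsBestResponseUpdate d a₁ a₂ η η' x) (ha₁ : 0 ≤ a₁) (ha₂ : 0 ≤ a₂)
    (hη : η ⊆ Phi d a₁ a₂ η) : η' ⊆ Phi d a₁ a₂ η' := fun y hy => by
  refine mem_Phi_of_subset ha₁ ha₂ (hu.subset hη) ?_ hy
  rcases eq_or_ne y x with rfl | hyx
  · exact hu.2.mp hy
  · exact hη ((hu.1 y hyx).mp hy)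

end IsBestResponseUpdate

end BestResponse

/-- Starting from a union of hypercubes, any sequence of single best-response updates
(with `a₁ > a₂ > 0`) produces a nondecreasing sequence of configurations, each contained
in its image under `Φ`. -/
theorem update_sequence_nondecreasing (d : ℕ) (hd : 1 ≤ d) (a₁ a₂ : ℝ)
    (ha : a₁ > a₂) (ha₂ : 0 < a₂)
    (η : ℕ → Set (Fin d → ℤ)) (h0 : IsUnionOfHypercubes d (η 0))
    (x : ℕ → Fin d → ℤ)
    (hoff : ∀ k, ∀ y : Fin d → ℤ, y ≠ x k → (y ∈ η (k + 1) ↔ y ∈ η k))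
    (hat : ∀ k, x k ∈ η (k + 1) ↔ x k ∈ Phi d a₁ a₂ (η k)) :
    ∀ k, η k ⊆ Phi d a₁ a₂ (η k) ∧ η k ⊆ η (k + 1) := by
  have hupdate k : IsBestResponseUpdate d a₁ a₂ (η k) (η (k + 1)) (x k) := ⟨hoff k, hat k⟩
  have hinv k : η k ⊆ Phi d a₁ a₂ (η k) := by
    induction k with
    | zero => exact h0.subset_Phi hd ha ha₂.le
    | succ k ih => exact (hupdate k).subset_Phi (ha₂.trans ha).le ha₂.le ih
  exact fun k => ⟨hinv k, (hupdate k).subset (hinv k)⟩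
end

section
/- Let a₁ > a₂ > 0, let η ⊆ ℤ^d be a union of hypercubes, let z ∈ ℤ^d, and suppose H_{z − e_j} ⊆ η for j = 1, 2, …, d, where e_j denotes the j-th standard basis vector of ℤ^d. Then for every n = 1, 2, …, d+1, the set 2z + {x ∈ {0,1}^d : x₁ + x₂ + ⋯ + x_d < n} is contained in the n-th iterate Φⁿ(η) of the best-response map. -/
/-!
A site with a neighbour in `ξ` along each of the `d` axes has at least `d` neighbours in `ξ`
and at most `d` outside it, so for `a₁ > a₂ ≥ 0` it plays strategy 1 in `Φ(ξ)`. Every vertex of a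
hypercube contained in `ξ` has such neighbours inside its own cube, so the cubes `H_{z - e_j}`
survive every iteration. A vertex `y` of `H_z` with coordinate sum `k` (relative to `2z`) has,
along each axis `i`, the neighbour `y - e_i`, which lies in `H_{z - e_i}` when `yᵢ = 2zᵢ` and in
`H_z` with coordinate sum `k - 1` otherwise; by induction on `n`, the vertices with coordinate sum
`< n` therefore belong to `Φⁿ(η)`.
-/

lemma exists_eq_single_of_sum_natAbs_eq_one {ι : Type*} [Fintype ι] [DecidableEq ι]
    {v : ι → ℤ} (h : ∑ i, (v i).natAbs = 1) :
    ∃ i, (v i = 1 ∨ v i = -1) ∧ v = Pi.single i (v i) := by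
  obtain ⟨i, -, hi⟩ := Finset.exists_ne_zero_of_sum_ne_zero (h.trans_ne one_ne_zero)
  have hsplit := Finset.add_sum_erase _ (fun j => (v j).natAbs) (Finset.mem_univ i)
  simp only [h] at hsplit hi
  obtain ⟨hi1, hrest⟩ : (v i).natAbs = 1 ∧ ∑ j ∈ Finset.univ.erase i, (v j).natAbs = 0 := by
    generalize (v i).natAbs = a at hsplit hi
    omega
  have hzero : ∀ j ≠ i, v j = 0 := fun j hj =>
    Int.natAbs_eq_zero.mp (Finset.sum_eq_zero_iff.mp hrest j (by simp [hj]))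
  refine ⟨i, Int.natAbs_eq_iff.mp hi1, funext fun j => ?_⟩
  by_cases hj : j = i
  · subst hj; simp
  · simp [hj, hzero j hj]

lemma neighbor_iff {d : ℕ} {x y : Fin d → ℤ} :
    Neighbor d x y ↔ ∃ i c, (c = 1 ∨ c = -1) ∧ y = x + Pi.single i c := by
  constructor
  · intro h
    obtain ⟨i, hc, hxy⟩ := exists_eq_single_of_sum_natAbs_eq_one (v := x - y) h
    refine ⟨i, -(x - y) i, by rw [neg_eq_iff_eq_neg, neg_eq_iff_eq_neg, neg_neg]; tauto, ?_⟩
    rw [Pi.single_neg, ← hxy]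
    abel
  · rintro ⟨i, c, hc, rfl⟩
    have : ∀ j, (x j - (x + Pi.single i c : Fin d → ℤ) j).natAbs
        = (Pi.single i c.natAbs : Fin d → ℕ) j := by
      intro j
      by_cases hj : j = i
      · subst hj; simp
      · simp [hj]
    simp only [Neighbor, this, Finset.sum_pi_single', Finset.mem_univ, if_true]
    rcases hc with rfl | rfl <;> rfl

lemma mem_Phi_of_forall_exists_neighbor_mem {d : ℕ} (hd : 0 < d) {a₁ a₂ : ℝ} (ha : a₂ < a₁)
    (ha₂ : 0 ≤ a₂) {ξ : Set (Fin d → ℤ)} {x : Fin d → ℤ}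
    (h : ∀ i, ∃ c : ℤ, (c = 1 ∨ c = -1) ∧ x + Pi.single i c ∈ ξ) :
    x ∈ Phi d a₁ a₂ ξ := by
  choose ε hε hmem using h
  set g : Fin d → Fin d → ℤ := fun i => x + Pi.single i (ε i)
  set u : Fin d → Fin d → ℤ := fun i => x + Pi.single i (-ε i)
  have hnbr : {y | Neighbor d x y} ⊆ Set.range g ∪ Set.range u := by
    intro y hy
    obtain ⟨i, c, hc, rfl⟩ := neighbor_iff.mp hy
    have : c = ε i ∨ c = -ε i := by
      rcases hc with rfl | rfl <;> rcases hε i with he | he <;> simp [he]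
    rcases this with rfl | rfl
    exacts [Or.inl ⟨i, rfl⟩, Or.inr ⟨i, rfl⟩]
  have hfin : {y | Neighbor d x y}.Finite :=
    ((Set.finite_range g).union (Set.finite_range u)).subset hnbr
  have hg : Function.Injective g := by
    intro i j hij
    by_contra hne
    have := congrFun hij i
    rcases hε i with he | he <;> simp [g, he, hne] at this
  have hN1 : d ≤ N1 d ξ x := by
    calc d = (Set.range g).ncard := by simp [Set.ncard_range_of_injective hg]
      _ ≤ N1 d ξ x := Set.ncard_le_ncard
          (Set.range_subset_iff.mpr fun i => ⟨neighbor_iff.mpr ⟨i, ε i, hε i, rfl⟩, hmem i⟩)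
          (hfin.subset fun _ hy => hy.1)
  have hN2 : N2 d ξ x ≤ d := by
    calc N2 d ξ x ≤ (Set.range u).ncard := by
          refine Set.ncard_le_ncard (fun y ⟨hy, hyξ⟩ => ?_) (Set.finite_range u)
          obtain ⟨i, rfl⟩ | hu := hnbr hy
          · exact absurd (hmem i) hyξ
          · exact hu
      _ ≤ d := by
          rw [← Set.image_univ]
          exact (Set.ncard_image_le Set.finite_univ).trans (by simp)
  have hd' : (0 : ℝ) < d := by exact_mod_cast hd
  have hN1' : (d : ℝ) ≤ N1 d ξ x := by exact_mod_cast hN1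
  have hN2' : (N2 d ξ x : ℝ) ≤ d := by exact_mod_cast hN2
  left
  calc a₂ * (N2 d ξ x : ℝ) ≤ a₂ * d := mul_le_mul_of_nonneg_left hN2' ha₂
    _ < a₁ * d := mul_lt_mul_of_pos_right ha hd'
    _ ≤ a₁ * N1 d ξ x := mul_le_mul_of_nonneg_left hN1' (ha₂.trans ha.le)

lemma exists_add_single_mem_Hcube {d : ℕ} {w x : Fin d → ℤ} (hx : x ∈ Hcube d w) (i : Fin d) :
    ∃ c : ℤ, (c = 1 ∨ c = -1) ∧ x + Pi.single i c ∈ Hcube d w := by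
  have hflip : ∀ c : ℤ, (x i + c = 2 * w i ∨ x i + c = 2 * w i + 1) →
      x + Pi.single i c ∈ Hcube d w := by
    intro c hc j
    by_cases hj : j = i
    · subst hj; simpa using hc
    · simpa [hj] using hx j
  rcases hx i with h | h
  · exact ⟨1, Or.inl rfl, hflip 1 (by omega)⟩
  · exact ⟨-1, Or.inr rfl, hflip (-1) (by omega)⟩

lemma Hcube_subset_Phi {d : ℕ} (hd : 0 < d) {a₁ a₂ : ℝ} (ha : a₂ < a₁) (ha₂ : 0 ≤ a₂)
    {ξ : Set (Fin d → ℤ)} {w : Fin d → ℤ} (h : Hcube d w ⊆ ξ) : Hcube d w ⊆ Phi d a₁ a₂ ξ :=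
  fun _ hx => mem_Phi_of_forall_exists_neighbor_mem hd ha ha₂ fun i =>
    (exists_add_single_mem_Hcube hx i).imp fun _ ⟨hc, hmem⟩ => ⟨hc, h hmem⟩

def hcubeBelow (d : ℕ) (z : Fin d → ℤ) (n : ℕ) : Set (Fin d → ℤ) :=
  {y | (∀ i, y i = 2 * z i ∨ y i = 2 * z i + 1) ∧ (∑ i, (y i - 2 * z i)) < (n : ℤ)}

lemma hcubeBelow_zero (d : ℕ) (z : Fin d → ℤ) : hcubeBelow d z 0 = ∅ := by
  refine Set.eq_empty_of_forall_notMem fun y ⟨hy, hsum⟩ => ?_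
  have : 0 ≤ ∑ i, (y i - 2 * z i) :=
    Finset.sum_nonneg fun i _ => by rcases hy i with h | h <;> omega
  omega

lemma hcubeBelow_succ_subset_Phi {d : ℕ} (hd : 0 < d) {a₁ a₂ : ℝ} (ha : a₂ < a₁) (ha₂ : 0 ≤ a₂)
    {ξ : Set (Fin d → ℤ)} {z : Fin d → ℤ} {m : ℕ}
    (hadj : ∀ j, Hcube d (z - Pi.single j 1) ⊆ ξ) (hm : hcubeBelow d z m ⊆ ξ) :
    hcubeBelow d z (m + 1) ⊆ Phi d a₁ a₂ ξ := by
  rintro y ⟨hy, hsum⟩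
  refine mem_Phi_of_forall_exists_neighbor_mem hd ha ha₂ fun i => ⟨-1, Or.inr rfl, ?_⟩
  rcases hy i with h | h
  · refine hadj i fun j => ?_
    by_cases hj : j = i
    · subst hj
      simp only [Pi.add_apply, Pi.sub_apply, h, Pi.single_eq_same]
      omega
    · simpa [hj] using hy j
  · refine hm ⟨fun j => ?_, ?_⟩
    · by_cases hj : j = i
      · subst hj; simp [h]
      · simpa [hj] using hy j
    · have : ∑ j, ((y + Pi.single i (-1) : Fin d → ℤ) j - 2 * z j)
          = ∑ j, (y j - 2 * z j) - 1 := by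
        simp only [Pi.add_apply, add_sub_right_comm, Finset.sum_add_distrib,
          Finset.sum_pi_single', Finset.mem_univ, if_true]
        ring
      push_cast at hsum
      omega

lemma hcubeBelow_subset_iterate_Phi {d : ℕ} (hd : 0 < d) {a₁ a₂ : ℝ} (ha : a₂ < a₁)
    (ha₂ : 0 ≤ a₂) {η : Set (Fin d → ℤ)} {z : Fin d → ℤ}
    (hadj : ∀ j, Hcube d (z - Pi.single j 1) ⊆ η) (m : ℕ) :
    (∀ j, Hcube d (z - Pi.single j 1) ⊆ (Phi d a₁ a₂)^[m] η) ∧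
      hcubeBelow d z m ⊆ (Phi d a₁ a₂)^[m] η := by
  induction m with
  | zero => exact ⟨hadj, by simp [hcubeBelow_zero]⟩
  | succ m ih =>
    rw [Function.iterate_succ_apply']
    exact ⟨fun j => Hcube_subset_Phi hd ha ha₂ (ih.1 j),
      hcubeBelow_succ_subset_Phi hd ha ha₂ ih.1 ih.2⟩

theorem corner_growth_general (d : ℕ) (hd : 1 ≤ d) (a₁ a₂ : ℝ)
    (ha : a₁ > a₂) (ha₂ : 0 < a₂)
    (η : Set (Fin d → ℤ)) (z : Fin d → ℤ)
    (hadj : ∀ j : Fin d, Hcube d (z - Pi.single j 1) ⊆ η) :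
    ∀ n : ℕ, 1 ≤ n → n ≤ d + 1 →
      {y : Fin d → ℤ | (∀ i, y i = 2 * z i ∨ y i = 2 * z i + 1) ∧
          (∑ i, (y i - 2 * z i)) < (n : ℤ)} ⊆ (Phi d a₁ a₂)^[n] η :=
  fun n _ _ => (hcubeBelow_subset_iterate_Phi hd ha ha₂.le hadj n).2

/-- If `a₁ > a₂ > 0`, `η` is a union of hypercubes, and the `d` hypercubes `H_{z - e_j}`
(`j = 1, …, d`) are contained in `η`, then for every `n = 1, …, d+1` the set
`2z + {x ∈ {0,1}^d : x₁ + ⋯ + x_d < n}` is contained in `Φⁿ(η)`. -/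
theorem corner_growth (d : ℕ) (hd : 1 ≤ d) (a₁ a₂ : ℝ)
    (ha : a₁ > a₂) (ha₂ : 0 < a₂)
    (η : Set (Fin d → ℤ)) (hη : IsUnionOfHypercubes d η) (z : Fin d → ℤ)
    (hadj : ∀ j : Fin d, Hcube d (z - Pi.single j 1) ⊆ η) :
    ∀ n : ℕ, 1 ≤ n → n ≤ d + 1 →
      {y : Fin d → ℤ | (∀ i, y i = 2 * z i ∨ y i = 2 * z i + 1) ∧
          (∑ i, (y i - 2 * z i)) < (n : ℤ)} ⊆ (Phi d a₁ a₂)^[n] η :=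
  corner_growth_general d hd a₁ a₂ ha ha₂ η z hadj
end

section
/- Let a₁ > a₂ > 0, let η ⊆ ℤ^d be a union of hypercubes, let z ∈ ℤ^d, and suppose H_{z − e_j} ⊆ η for j = 1, 2, …, d, where e_j denotes the j-th standard basis vector of ℤ^d. Then the full hypercube H_z is contained in Φ^{d+1}(η), the (d+1)-st iterate of the best-response map applied to η. (This is the deterministic step by which d fully occupied adjacent hypercubes force the occupation of H_z, used to dominate bootstrap percolation with parameter d.) -/
/-!
A site with a strategy-1 neighbour along each of the `d` axes has `N₁ ≥ d ≥ N₂`, so it plays 1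
under `Φ` because `a₁ > a₂ > 0`. Every site of a hypercube in `η` has such neighbours inside its
own hypercube, hence `η ⊆ Φᵏ(η)` for all `k`. For `x ∈ H_z`, call its height the number of
coordinates on the upper face `x i = 2 z i + 1`. Along each axis the lower neighbour of `x` lies
either in `H_{z - e_i} ⊆ η` or in `H_z` with height one less, so by induction on the height
`x ∈ Φ^{h+1}(η)`; the height is at most `d`.
-/

open Function

section

variable {d : ℕ} {a₁ a₂ : ℝ}

lemma neighbor_add_single (x : Fin d → ℤ) (i : Fin d) (u : ℤˣ) :
    Neighbor d x (x + Pi.single i (u : ℤ)) := by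
  unfold Neighbor
  rw [Finset.sum_eq_single i (fun j _ hj => by simp [hj]) (by simp)]
  simp

lemma Neighbor.exists_eq_add_single {x y : Fin d → ℤ} (h : Neighbor d x y) :
    ∃ i, ∃ u : ℤˣ, y = x + Pi.single i (u : ℤ) := by
  obtain ⟨i, -, hi⟩ := Finset.exists_ne_zero_of_sum_ne_zero (h.trans_ne one_ne_zero)
  have hsplit := Finset.add_sum_erase Finset.univ (fun j => (x j - y j).natAbs) (Finset.mem_univ i)
  rw [h] at hsplit
  have hrest : ∀ j ≠ i, x j = y j := fun j hj => by
    have := (Finset.sum_eq_zero_iff (s := Finset.univ.erase i)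
      (f := fun j => (x j - y j).natAbs)).mp (by omega) j (by simp [hj])
    omega
  refine ⟨i, (Int.isUnit_iff_natAbs_eq.mpr (by omega : (y i - x i).natAbs = 1)).unit, ?_⟩
  funext j
  by_cases hj : j = i
  · subst hj; simp
  · simp [hj, hrest j hj]

lemma setOf_neighbor_eq_range (x : Fin d → ℤ) :
    {y | Neighbor d x y} = Set.range fun p : Fin d × ℤˣ => x + Pi.single p.1 (p.2 : ℤ) := by
  ext y
  refine ⟨fun h => ?_, ?_⟩
  · obtain ⟨i, u, rfl⟩ := h.exists_eq_add_single
    exact ⟨(i, u), rfl⟩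
  · rintro ⟨⟨i, u⟩, rfl⟩
    exact neighbor_add_single x i u

lemma finite_setOf_neighbor (x : Fin d → ℤ) : {y | Neighbor d x y}.Finite := by
  rw [setOf_neighbor_eq_range]
  exact Set.finite_range _

lemma ncard_setOf_neighbor_le (x : Fin d → ℤ) : {y | Neighbor d x y}.ncard ≤ 2 * d := by
  rw [setOf_neighbor_eq_range, ← Nat.card_coe_set_eq]
  refine (Finite.card_range_le _).trans ?_
  simp [Fintype.card_units_int, mul_comm]

lemma mem_phi_of_forall_exists_add_single_mem (hd : 1 ≤ d) (ha : a₂ < a₁)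
    (ha₂ : 0 < a₂) {ξ : Set (Fin d → ℤ)} {x : Fin d → ℤ}
    (h : ∀ i, ∃ u : ℤˣ, x + Pi.single i (u : ℤ) ∈ ξ) : x ∈ Phi d a₁ a₂ ξ := by
  choose u hu using h
  set nbrs := {y | Neighbor d x y}
  have hinj : Injective fun i => x + Pi.single i (u i : ℤ) := fun i j hij => by
    by_contra hne
    have := congrFun hij i
    simp [Pi.single_eq_of_ne hne] at this
  have hN1 : d ≤ N1 d ξ x := by
    calc d = (Set.range fun i => x + Pi.single i (u i : ℤ)).ncard := by
          rw [Set.ncard_range_of_injective hinj, Nat.card_fin]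
      _ ≤ (nbrs ∩ ξ).ncard := by
          refine Set.ncard_le_ncard ?_ ((finite_setOf_neighbor x).inter_of_left ξ)
          rintro _ ⟨i, rfl⟩
          exact ⟨neighbor_add_single x i (u i), hu i⟩
  have hN12 : N1 d ξ x + N2 d ξ x ≤ 2 * d :=
    (Set.ncard_inter_add_ncard_sdiff_eq_ncard nbrs ξ (finite_setOf_neighbor x)).trans_le
      (ncard_setOf_neighbor_le x)
  have hN1' : (d : ℝ) ≤ N1 d ξ x := by exact_mod_cast hN1
  have hN2 : (N2 d ξ x : ℝ) ≤ d := by exact_mod_cast (by omega : N2 d ξ x ≤ d)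
  have hd' : (0 : ℝ) < d := by exact_mod_cast hd
  left
  calc a₂ * N2 d ξ x ≤ a₂ * d := by gcongr
    _ < a₁ * d := by gcongr
    _ ≤ a₁ * N1 d ξ x := by gcongr; linarith

lemma add_single_mem_hcube {w x : Fin d → ℤ} (hx : x ∈ Hcube d w) {i : Fin d} {v : ℤ}
    (hv : x i + v = 2 * w i ∨ x i + v = 2 * w i + 1) : x + Pi.single i v ∈ Hcube d w :=
  fun j => by
    by_cases hj : j = i
    · subst hj; simpa using hv
    · simpa [hj] using hx j

lemma exists_add_single_mem_hcube {w x : Fin d → ℤ} (hx : x ∈ Hcube d w) (i : Fin d) :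
    ∃ u : ℤˣ, x + Pi.single i (u : ℤ) ∈ Hcube d w := by
  rcases hx i with hi | hi
  · exact ⟨1, add_single_mem_hcube hx (by simp [hi])⟩
  · exact ⟨-1, add_single_mem_hcube hx (by simp [hi])⟩

lemma sub_single_mem_hcube_sub_single {z x : Fin d → ℤ} (hx : x ∈ Hcube d z) {i : Fin d}
    (hi : x i = 2 * z i) : x - Pi.single i 1 ∈ Hcube d (z - Pi.single i 1) := fun j => by
  by_cases hj : j = i
  · subst hj; right; simp only [Pi.sub_apply, Pi.single_eq_same]; omega
  · simpa [hj] using hx j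

lemma sub_single_mem_hcube {z x : Fin d → ℤ} (hx : x ∈ Hcube d z) {i : Fin d}
    (hi : x i = 2 * z i + 1) : x - Pi.single i 1 ∈ Hcube d z := by
  simpa [sub_eq_add_neg, Pi.single_neg] using add_single_mem_hcube hx (i := i) (v := -1) (by omega)

def hcubeHeight (z x : Fin d → ℤ) : ℤ :=
  ∑ i, (x i - 2 * z i)

lemma hcubeHeight_nonneg {z x : Fin d → ℤ} (hx : x ∈ Hcube d z) : 0 ≤ hcubeHeight z x :=
  Finset.sum_nonneg fun i _ => by rcases hx i with h | h <;> omega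

lemma hcubeHeight_le {z x : Fin d → ℤ} (hx : x ∈ Hcube d z) : hcubeHeight z x ≤ d := by
  calc hcubeHeight z x ≤ ∑ _i : Fin d, (1 : ℤ) :=
        Finset.sum_le_sum fun i _ => by rcases hx i with h | h <;> omega
    _ = d := by simp

lemma hcubeHeight_sub_single (z x : Fin d → ℤ) (i : Fin d) :
    hcubeHeight z (x - Pi.single i 1) = hcubeHeight z x - 1 := by
  simp [hcubeHeight, Finset.sum_sub_distrib, sub_right_comm]

lemma subset_phi_of_subset (hd : 1 ≤ d) (ha : a₂ < a₁) (ha₂ : 0 < a₂) {η ξ : Set (Fin d → ℤ)}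
    (hη : IsUnionOfHypercubes d η) (hηξ : η ⊆ ξ) : η ⊆ Phi d a₁ a₂ ξ := by
  obtain ⟨S, rfl⟩ := hη
  intro x hx
  obtain ⟨w, hw, hxw⟩ := Set.mem_iUnion₂.mp hx
  refine mem_phi_of_forall_exists_add_single_mem hd ha ha₂ fun i => ?_
  obtain ⟨u, hu⟩ := exists_add_single_mem_hcube hxw i
  exact ⟨u, hηξ (Set.mem_biUnion hw hu)⟩

lemma subset_iterate_phi (hd : 1 ≤ d) (ha : a₂ < a₁) (ha₂ : 0 < a₂) {η : Set (Fin d → ℤ)}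
    (hη : IsUnionOfHypercubes d η) (k : ℕ) : η ⊆ (Phi d a₁ a₂)^[k] η := by
  induction k with
  | zero => exact subset_rfl
  | succ k ih =>
    rw [iterate_succ_apply']
    exact subset_phi_of_subset hd ha ha₂ hη ih

lemma mem_iterate_phi_of_hcubeHeight_lt (hd : 1 ≤ d) (ha : a₂ < a₁)
    (ha₂ : 0 < a₂) {η : Set (Fin d → ℤ)} (hη : IsUnionOfHypercubes d η) {z : Fin d → ℤ}
    (hadj : ∀ j, Hcube d (z - Pi.single j 1) ⊆ η) (k : ℕ) :
    ∀ x ∈ Hcube d z, hcubeHeight z x < k → x ∈ (Phi d a₁ a₂)^[k] η := by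
  induction k with
  | zero => exact fun x hx hlt => absurd (hcubeHeight_nonneg hx) (by simpa using hlt)
  | succ k ih =>
    intro x hx hlt
    rw [iterate_succ_apply']
    refine mem_phi_of_forall_exists_add_single_mem hd ha ha₂ fun i => ⟨-1, ?_⟩
    rw [Units.val_neg, Units.val_one, Pi.single_neg, ← sub_eq_add_neg]
    rcases hx i with hi | hi
    · exact subset_iterate_phi hd ha ha₂ hη k (hadj i (sub_single_mem_hcube_sub_single hx hi))
    · refine ih _ (sub_single_mem_hcube hx hi) ?_
      rw [hcubeHeight_sub_single]
      push_cast at hlt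
      linarith

end

/-- If `a₁ > a₂ > 0`, `η` is a union of hypercubes, and the `d` hypercubes `H_{z - e_j}`
(`j = 1, …, d`) are contained in `η`, then the whole hypercube `H_z` is contained in
`Φ^{d+1}(η)` (the step dominating bootstrap percolation with parameter `d`). -/
theorem hypercube_filled (d : ℕ) (hd : 1 ≤ d) (a₁ a₂ : ℝ)
    (ha : a₁ > a₂) (ha₂ : 0 < a₂)
    (η : Set (Fin d → ℤ)) (hη : IsUnionOfHypercubes d η) (z : Fin d → ℤ)
    (hadj : ∀ j : Fin d, Hcube d (z - Pi.single j 1) ⊆ η) :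
    Hcube d z ⊆ (Phi d a₁ a₂)^[d + 1] η := fun x hx =>
  mem_iterate_phi_of_hcubeHeight_lt hd ha ha₂ hη hadj (d + 1) x hx
    (by push_cast; linarith [hcubeHeight_le hx])
end
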